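/- For K ≥ 2 and Δ > 0, consider the equal-gap bandit optimization T⋆ = min over w in the open simplex of (1/Δ²) max_{a ≠ a⋆} (1/w_a + 1/w_{a⋆}), where all K-1 suboptimal arms have gap Δ. The optimal allocation is w_{a⋆} = √(K-1)/(√(K-1) + K - 1) and w_a = 1/(√(K-1) + K - 1) for a ≠ a⋆, and the optimal value is T⋆ = (1 + √(K-1))²/Δ². -/

import Mathlib

/-- Equal-gap objective `(1/Δ²) max_{a ≠ a⋆} (1/w_a + 1/w_{a⋆})`. -/
noncomputable def eqGapObj (K : ℕ) (astar : Fin K) (Δ : ℝ) (w : Fin K → ℝ) : ℝ :=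
  (1/Δ^2) * sSup {x | ∃ a, a ≠ astar ∧ x = 1/(w a) + 1/(w astar)}

/-!
Let `a` be the lightest suboptimal arm, so that `(K-1) w_a ≤ 1 - w_{a⋆}`. By Cauchy–Schwarz,
`(√(K-1) + 1)² ≤ ((K-1) w_a + w_{a⋆}) (1/w_a + 1/w_{a⋆}) ≤ 1/w_a + 1/w_{a⋆}`,
and the proposed allocation, where all suboptimal arms are equal and Cauchy–Schwarz is tight,
attains this bound.
-/

open Finset

lemma add_sq_le_mul_one_div_add_one_div (a b : ℝ) {u t : ℝ} (hu : 0 < u) (ht : 0 < t) :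
    (a + b) ^ 2 ≤ (a ^ 2 * u + b ^ 2 * t) * (1 / u + 1 / t) := by
  rw [div_add_div _ _ hu.ne' ht.ne', mul_div_assoc', le_div_iff₀ (by positivity)]
  nlinarith [sq_nonneg (a * u - b * t)]

section Fintype

variable {ι : Type*} [Fintype ι] [DecidableEq ι]

lemma Fintype.sum_ite_eq_add_card_sub_one_mul (i : ι) (x y : ℝ) :
    ∑ j, (if j = i then x else y) = x + (Fintype.card ι - 1) * y := by
  rw [sum_ite, filter_eq', filter_ne', sum_const, sum_const, card_erase_of_mem (mem_univ i)]
  rw [if_pos (mem_univ i), card_singleton, one_smul, nsmul_eq_mul, card_univ,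
    Nat.cast_sub (Fintype.card_pos_iff.mpr ⟨i⟩), Nat.cast_one]

lemma Fintype.exists_ne_card_sub_one_mul_le [Nontrivial ι] (i : ι) (w : ι → ℝ) :
    ∃ j ≠ i, (Fintype.card ι - 1) * w j ≤ ∑ k, w k - w i := by
  obtain ⟨j, hj, hmin⟩ := (univ.erase i).exists_min_image w univ_nontrivial.erase_nonempty
  refine ⟨j, ne_of_mem_erase hj, ?_⟩
  have := (univ.erase i).card_nsmul_le_sum w (w j) hmin
  rw [card_erase_of_mem (mem_univ i), nsmul_eq_mul, card_univ, Nat.cast_sub (Fintype.card_pos_iff.mpr ⟨i⟩),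
    Nat.cast_one] at this
  linarith [add_sum_erase univ w (mem_univ i)]

end Fintype

section eqGapObj

variable {K : ℕ} {astar : Fin K} (Δ : ℝ) {w : Fin K → ℝ}

lemma eqGapObj_eq_of_forall_ne {c : ℝ} (hne : ∃ a, a ≠ astar)
    (h : ∀ a, a ≠ astar → 1 / w a + 1 / w astar = c) : eqGapObj K astar Δ w = c / Δ ^ 2 := by
  have hset : {x | ∃ a, a ≠ astar ∧ x = 1 / w a + 1 / w astar} = {c} := by
    obtain ⟨a₀, ha₀⟩ := hne
    ext x
    constructor
    · rintro ⟨a, ha, rfl⟩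
      exact h a ha
    · rintro rfl
      exact ⟨a₀, ha₀, (h a₀ ha₀).symm⟩
  rw [eqGapObj, hset, csSup_singleton, one_div_mul_eq_div]

lemma div_sq_le_eqGapObj {a : Fin K} (ha : a ≠ astar) :
    (1 / w a + 1 / w astar) / Δ ^ 2 ≤ eqGapObj K astar Δ w := by
  have hbdd : BddAbove {x | ∃ a, a ≠ astar ∧ x = 1 / w a + 1 / w astar} :=
    ((Set.finite_range fun a => 1 / w a + 1 / w astar).subset
      (by rintro x ⟨a, -, rfl⟩; exact ⟨a, rfl⟩)).bddAbove
  rw [eqGapObj, ← one_div_mul_eq_div]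
  gcongr
  exact le_csSup hbdd ⟨a, ha, rfl⟩

end eqGapObj

theorem stmt5_general (K : ℕ) (hK : 2 ≤ K) (Δ : ℝ) (astar : Fin K) :
    let wopt : Fin K → ℝ := fun a => if a = astar
      then Real.sqrt ((K:ℝ)-1) / (Real.sqrt ((K:ℝ)-1) + ((K:ℝ)-1))
      else 1 / (Real.sqrt ((K:ℝ)-1) + ((K:ℝ)-1))
    ((∀ a, 0 < wopt a) ∧ ∑ a, wopt a = 1) ∧
    eqGapObj K astar Δ wopt = (1 + Real.sqrt ((K:ℝ)-1))^2 / Δ^2 ∧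
    ∀ w : Fin K → ℝ, (∀ a, 0 < w a) → ∑ a, w a = 1 →
      eqGapObj K astar Δ wopt ≤ eqGapObj K astar Δ w := by
  intro wopt
  have : Nontrivial (Fin K) := Fin.nontrivial_iff_two_le.mpr hK
  have hK1 : (0 : ℝ) < K - 1 := by
    have : (2 : ℝ) ≤ K := by exact_mod_cast hK
    linarith
  set s := Real.sqrt ((K:ℝ)-1)
  have hs : 0 < s := Real.sqrt_pos.mpr hK1
  have hs2 : s ^ 2 = K - 1 := Real.sq_sqrt hK1.le
  have hwstar : wopt astar = s / (s + s ^ 2) := by rw [hs2]; exact if_pos rfl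
  have hwsub : ∀ a, a ≠ astar → wopt a = 1 / (s + s ^ 2) := by
    intro a ha; rw [hs2]; exact if_neg ha
  have hpos : ∀ a, 0 < wopt a := by
    intro a
    by_cases ha : a = astar
    · rw [ha, hwstar]; positivity
    · rw [hwsub a ha]; positivity
  have hsum : ∑ a, wopt a = 1 := by
    show ∑ a, (if a = astar then s / (s + (K - 1)) else 1 / (s + (K - 1))) = 1
    rw [Fintype.sum_ite_eq_add_card_sub_one_mul, Fintype.card_fin, ← hs2]
    field_simp
  have hval : eqGapObj K astar Δ wopt = (1 + s) ^ 2 / Δ ^ 2 := by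
    refine eqGapObj_eq_of_forall_ne Δ (exists_ne astar) fun a ha => ?_
    rw [hwsub a ha, hwstar]
    field_simp
    ring
  refine ⟨⟨hpos, hsum⟩, hval, fun w hw hw1 => ?_⟩
  obtain ⟨a, ha, hle⟩ := Fintype.exists_ne_card_sub_one_mul_le astar w
  rw [Fintype.card_fin, hw1, ← hs2] at hle
  calc eqGapObj K astar Δ wopt = (s + 1) ^ 2 / Δ ^ 2 := by rw [hval, add_comm]
    _ ≤ (s ^ 2 * w a + 1 ^ 2 * w astar) * (1 / w a + 1 / w astar) / Δ ^ 2 := by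
      gcongr
      exact add_sq_le_mul_one_div_add_one_div s 1 (hw a) (hw astar)
    _ ≤ (1 / w a + 1 / w astar) / Δ ^ 2 := by
      have hinv : 0 ≤ 1 / w a + 1 / w astar := by
        have := hw a; have := hw astar; positivity
      gcongr
      exact mul_le_of_le_one_left hinv (by linarith)
    _ ≤ eqGapObj K astar Δ w := div_sq_le_eqGapObj Δ ha

/-- Equal-gap unconstrained optimum: `w_{a⋆} = √(K-1)/(√(K-1)+K-1)`,
`w_a = 1/(√(K-1)+K-1)` otherwise, with optimal value `(1+√(K-1))²/Δ²`. -/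
theorem stmt5 (K : ℕ) (hK : 2 ≤ K) (Δ : ℝ) (hΔ : 0 < Δ) (astar : Fin K) :
    let wopt : Fin K → ℝ := fun a => if a = astar
      then Real.sqrt ((K:ℝ)-1) / (Real.sqrt ((K:ℝ)-1) + ((K:ℝ)-1))
      else 1 / (Real.sqrt ((K:ℝ)-1) + ((K:ℝ)-1))
    ((∀ a, 0 < wopt a) ∧ ∑ a, wopt a = 1) ∧
    eqGapObj K astar Δ wopt = (1 + Real.sqrt ((K:ℝ)-1))^2 / Δ^2 ∧
    ∀ w : Fin K → ℝ, (∀ a, 0 < w a) → ∑ a, w a = 1 →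
      eqGapObj K astar Δ wopt ≤ eqGapObj K astar Δ w :=
  stmt5_general K hK Δ astar
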